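/- For c ∈ (0,1) and a_z ∈ [-1,1], ∫₋₁¹ ρ_a(t)·a_z(t) dt = a_z, where ρ_a(t) := (1 + G(t)·a_z)·ρ(t), a_z(t) := (a_z + G(t))/(1 + G(t)·a_z), and ρ(t) := (s·ln γ)/(4c)/√(1 - G(t)²). -/

import Mathlib

open Real

/-! Since `log γ = 2 artanh c`, the substitution `G t = tanh (t · artanh c)` turns `ρ` into a
multiple of `cosh (t · artanh c)`. The factor `1 + G t · a_z` cancels (it is positive, as
`|G t| < 1`), so the integrand is `(s log γ / 4c) (a_z cosh + sinh)(t · artanh c)`. The odd `sinh`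
part integrates to zero over `[-1, 1]` and the `cosh` part to `2 a_z sinh (artanh c) / artanh c`,
which equals `a_z` because `sinh (artanh c) = c / s`. -/

namespace Real

theorem tanh_eq_exp_two_mul (x : ℝ) : tanh x = (exp (2 * x) - 1) / (exp (2 * x) + 1) := by
  have hx : exp (2 * x) = exp x * exp x := by rw [two_mul, exp_add]
  rw [tanh_eq, exp_neg, hx]
  field_simp

theorem rpow_sub_one_div_rpow_add_one {a : ℝ} (ha : 0 < a) (t : ℝ) :
    (a ^ t - 1) / (a ^ t + 1) = tanh (t * (log a / 2)) := by
  rw [tanh_eq_exp_two_mul, rpow_def_of_pos ha]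
  ring_nf

theorem one_div_sqrt_one_sub_tanh_sq (x : ℝ) : 1 / √(1 - tanh x ^ 2) = cosh x := by
  rw [← cosh_artanh ⟨neg_one_lt_tanh x, tanh_lt_one x⟩, artanh_tanh]

theorem one_add_tanh_mul_pos {a : ℝ} (ha : |a| ≤ 1) (x : ℝ) : 0 < 1 + tanh x * a := by
  have : |tanh x * a| < 1 := by
    rw [abs_mul]
    nlinarith [abs_tanh_lt_one x, abs_nonneg (tanh x), abs_nonneg a]
  linarith [(abs_lt.mp this).1]

theorem integral_mul_cosh_add_sinh (p : ℝ) {L : ℝ} (hL : L ≠ 0) :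
    ∫ t in (-1 : ℝ)..1, (p * cosh (t * L) + sinh (t * L)) = 2 * p * sinh L / L := by
  have hderiv : ∀ t ∈ Set.uIcc (-1 : ℝ) 1,
      HasDerivAt (fun t => (p * sinh (t * L) + cosh (t * L)) / L)
        (p * cosh (t * L) + sinh (t * L)) t := by
    intro t _
    have hlin : HasDerivAt (fun t : ℝ => t * L) L t := by
      simpa using (hasDerivAt_id t).mul_const L
    refine (((hlin.sinh.const_mul p).add hlin.cosh).div_const L).congr_deriv ?_
    field_simp
  rw [intervalIntegral.integral_eq_sub_of_hasDerivAt hderiv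
    (Continuous.intervalIntegrable (by fun_prop) _ _)]
  simp only [one_mul, neg_one_mul, sinh_neg, cosh_neg]
  ring

end Real

theorem rho_a_marginal (c : ℝ) (hc : c ∈ Set.Ioo (0:ℝ) 1)
    (s : ℝ) (hs : s = Real.sqrt (1 - c ^ 2))
    (γ : ℝ) (hγ : γ = (1 + c) / (1 - c))
    (G : ℝ → ℝ) (hG : ∀ t : ℝ, G t = (γ ^ t - 1) / (γ ^ t + 1))
    (ρ : ℝ → ℝ) (hρ : ∀ t : ℝ, ρ t = s * Real.log γ / (4 * c) * (1 / Real.sqrt (1 - G t ^ 2)))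
    (az : ℝ) (haz : az ∈ Set.Icc (-1 : ℝ) 1)
    (ρa : ℝ → ℝ) (hρa : ∀ t : ℝ, ρa t = (1 + G t * az) * ρ t) :
    ∫ t in (-1 : ℝ)..1, ρa t * ((az + G t) / (1 + G t * az)) = az := by
  obtain ⟨hc0, hc1⟩ := hc
  have hγ0 : 0 < γ := by rw [hγ]; exact div_pos (by linarith) (by linarith)
  have hlogγ : log γ = 2 * artanh c := by
    rw [artanh_eq_half_log ⟨by linarith, hc1.le⟩, ← hγ]
    ring
  have hGt (t : ℝ) : G t = tanh (t * artanh c) := by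
    rw [hG, rpow_sub_one_div_rpow_add_one hγ0, hlogγ, mul_div_cancel_left₀ _ two_ne_zero]
  have hL0 : artanh c ≠ 0 := (artanh_pos ⟨hc0, hc1⟩).ne'
  have hs0 : 0 < s := hs ▸ sqrt_pos.mpr (by nlinarith)
  have hsinhL : sinh (artanh c) = c / s := hs ▸ sinh_artanh ⟨by linarith, hc1⟩
  have hintegrand (t : ℝ) : ρa t * ((az + G t) / (1 + G t * az))
      = s * artanh c / (2 * c) * (az * cosh (t * artanh c) + sinh (t * artanh c)) := by
    have hpos : 1 + G t * az ≠ 0 := (hGt t ▸ one_add_tanh_mul_pos (abs_le.mpr haz) _).ne'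
    have hcosh := (cosh_pos (t * artanh c)).ne'
    rw [hρa, mul_comm (1 + G t * az), mul_assoc, mul_div_cancel₀ _ hpos, hρ, hGt,
      one_div_sqrt_one_sub_tanh_sq, hlogγ, tanh_eq_sinh_div_cosh]
    field_simp
    ring
  rw [intervalIntegral.integral_congr (fun t _ => hintegrand t), intervalIntegral.integral_const_mul,
    integral_mul_cosh_add_sinh az hL0, hsinhL]
  field_simp
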